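/- In the setting of the 1D Coulomb gas ε² ẍ_i = −2 x_i + 2(2i−1−N)/N with initial data v_i⁰ = 0 and x_i⁰ = (2i−1−N)/N + 1/N for each 1 ≤ i ≤ N: the particles preserve their order for all times (indeed x_{i+1}(t) − x_i(t) = 2/N for all t), the explicit solution is x_i(t) = (1/N) cos(√2 t/ε) + (2i−1−N)/N and v_i(t) = −(√2/(Nε)) sin(√2 t/ε), and hence the empirical current J_N(t) = (1/N)∑_i v_i(t) δ_{x_i(t)} equals −(√2 sin(√2 t/ε)/(Nε)) μ_N(t), where μ_N(t) is the empirical spatial measure. -/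

import Mathlib

open Finset

/-!
Each `x i` is a harmonic oscillator of frequency `√2/ε` about its lattice site `(2i+1-N)/N`,
started at rest with amplitude `1/N`. Uniqueness comes from the conserved energy
`w² + ω² u²` of the difference `(u, w)` from the explicit cosine solution: it vanishes at
time `0`, hence everywhere, so `w ≡ 0` and then `u` is constant, equal to `u 0 = 0`.
Since the velocity does not depend on `i`, it factors out of the empirical current.
-/

section HarmonicOscillator

variable {ω : ℝ} {u w : ℝ → ℝ}

theorem harmonic_energy_hasDerivAt_zero (hu : ∀ t, HasDerivAt u (w t) t)
    (hw : ∀ t, HasDerivAt w (-(ω ^ 2) * u t) t) (t : ℝ) :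
    HasDerivAt (fun s => w s ^ 2 + ω ^ 2 * u s ^ 2) 0 t :=
  (((hw t).pow 2).add (((hu t).pow 2).const_mul (ω ^ 2))).congr_deriv (by ring)

theorem harmonic_eq_zero_of_initial_eq_zero (hu : ∀ t, HasDerivAt u (w t) t)
    (hw : ∀ t, HasDerivAt w (-(ω ^ 2) * u t) t) {t₀ : ℝ} (hu0 : u t₀ = 0) (hw0 : w t₀ = 0)
    (t : ℝ) : u t = 0 ∧ w t = 0 := by
  have hE := harmonic_energy_hasDerivAt_zero hu hw
  have hw_zero : ∀ s, w s = 0 := fun s => by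
    have hEs := is_const_of_deriv_eq_zero (fun r => (hE r).differentiableAt)
      (fun r => (hE r).deriv) s t₀
    simp only [hu0, hw0] at hEs
    nlinarith [sq_nonneg (w s), mul_nonneg (sq_nonneg ω) (sq_nonneg (u s))]
  have hu_const := is_const_of_deriv_eq_zero (fun r => (hu r).differentiableAt)
    (fun r => (hu r).deriv.trans (hw_zero r)) t t₀
  exact ⟨hu_const.trans hu0, hw_zero t⟩

theorem harmonic_eq_cos_of_rest {x v : ℝ → ℝ} {a c : ℝ} (hx : ∀ t, HasDerivAt x (v t) t)
    (hv : ∀ t, HasDerivAt v (-(ω ^ 2) * (x t - c)) t) (hx0 : x 0 = a + c) (hv0 : v 0 = 0)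
    (t : ℝ) : x t = a * Real.cos (ω * t) + c ∧ v t = -(a * ω) * Real.sin (ω * t) := by
  have hlin : ∀ s, HasDerivAt (fun r => ω * r) ω s := fun s => by
    simpa using (hasDerivAt_id s).const_mul ω
  obtain ⟨hu, hw⟩ := harmonic_eq_zero_of_initial_eq_zero (ω := ω)
    (u := fun s => x s - (a * Real.cos (ω * s) + c))
    (w := fun s => v s - (-(a * ω) * Real.sin (ω * s)))
    (fun s => ((hx s).sub ((((hlin s).cos).const_mul a).add_const c)).congr_deriv (by ring))
    (fun s => ((hv s).sub (((hlin s).sin).const_mul (-(a * ω)))).congr_deriv (by ring))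
    (t₀ := 0) (by simp [hx0]) (by simp [hv0]) t
  exact ⟨sub_eq_zero.mp hu, sub_eq_zero.mp hw⟩

end HarmonicOscillator

theorem oneD_coulomb_lattice_current_general (N : ℕ) (ε : ℝ)
    (x v : Fin N → ℝ → ℝ)
    (hx : ∀ i t, HasDerivAt (x i) (v i t) t)
    (hv : ∀ i t, HasDerivAt (v i)
      ((-2 * x i t + 2 * (2 * ((i : ℕ) : ℝ) + 1 - N) / N) / ε ^ 2) t)
    (hx0 : ∀ i, x i 0 = (2 * ((i : ℕ) : ℝ) + 1 - N) / N + 1 / N)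
    (hv0 : ∀ i, v i 0 = 0) :
    (∀ (t : ℝ) (i : Fin N) (hsucc : (i : ℕ) + 1 < N),
        x ⟨(i : ℕ) + 1, hsucc⟩ t - x i t = 2 / N) ∧
    (∀ (t : ℝ) (i : Fin N),
        x i t = (1 / (N : ℝ)) * Real.cos (Real.sqrt 2 * t / ε)
          + (2 * ((i : ℕ) : ℝ) + 1 - N) / N) ∧
    (∀ (t : ℝ) (i : Fin N),
        v i t = -(Real.sqrt 2 / ((N : ℝ) * ε)) * Real.sin (Real.sqrt 2 * t / ε)) ∧
    (∀ (t : ℝ) (φ : ℝ → ℝ),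
        (1 / (N : ℝ)) * ∑ i, v i t * φ (x i t)
          = -(Real.sqrt 2 * Real.sin (Real.sqrt 2 * t / ε) / ((N : ℝ) * ε))
              * ((1 / (N : ℝ)) * ∑ i, φ (x i t))) := by
  have hω : (Real.sqrt 2 / ε) ^ 2 = 2 / ε ^ 2 := by
    rw [div_pow, Real.sq_sqrt zero_le_two]
  have hsol (i : Fin N) (t : ℝ) := harmonic_eq_cos_of_rest (ω := Real.sqrt 2 / ε)
    (a := 1 / N) (c := (2 * ((i : ℕ) : ℝ) + 1 - N) / N) (hx i)
    (fun s => (hv i s).congr_deriv (by rw [hω]; ring)) (by rw [hx0, add_comm]) (hv0 i) t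
  have hpos (t : ℝ) (i : Fin N) : x i t = (1 / (N : ℝ)) * Real.cos (Real.sqrt 2 * t / ε)
      + (2 * ((i : ℕ) : ℝ) + 1 - N) / N := by
    rw [(hsol i t).1, mul_div_right_comm]
  have hvel (t : ℝ) (i : Fin N) :
      v i t = -(Real.sqrt 2 / ((N : ℝ) * ε)) * Real.sin (Real.sqrt 2 * t / ε) := by
    rw [(hsol i t).2, mul_div_right_comm]; ring
  refine ⟨fun t i hsucc => ?_, hpos, hvel, fun t φ => ?_⟩
  · rw [hpos, hpos]; push_cast; ring
  · simp only [hvel, ← Finset.mul_sum]; ring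

/-- The perturbed-lattice solution of the 1D Coulomb gas
`ε² ẍ_i = −2 x_i + 2(2i−1−N)/N` with `v_i⁰ = 0`, `x_i⁰ = (2i−1−N)/N + 1/N`
(0-based indices: `2i+1−N`): gaps are constant `2/N`, the solution is
`x_i(t) = (1/N) cos(√2 t/ε) + (2i−1−N)/N`, `v_i(t) = −(√2/(Nε)) sin(√2 t/ε)`,
and the empirical current satisfies
`J_N(t) = −(√2 sin(√2 t/ε)/(Nε)) μ_N(t)` (tested against any function `φ`). -/
theorem oneD_coulomb_lattice_current (N : ℕ) (hN : 0 < N) (ε : ℝ) (hε : 0 < ε)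
    (x v : Fin N → ℝ → ℝ)
    (hx : ∀ i t, HasDerivAt (x i) (v i t) t)
    (hv : ∀ i t, HasDerivAt (v i)
      ((-2 * x i t + 2 * (2 * ((i : ℕ) : ℝ) + 1 - N) / N) / ε ^ 2) t)
    (hx0 : ∀ i, x i 0 = (2 * ((i : ℕ) : ℝ) + 1 - N) / N + 1 / N)
    (hv0 : ∀ i, v i 0 = 0) :
    (∀ (t : ℝ) (i : Fin N) (hsucc : (i : ℕ) + 1 < N),
        x ⟨(i : ℕ) + 1, hsucc⟩ t - x i t = 2 / N) ∧
    (∀ (t : ℝ) (i : Fin N),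
        x i t = (1 / (N : ℝ)) * Real.cos (Real.sqrt 2 * t / ε)
          + (2 * ((i : ℕ) : ℝ) + 1 - N) / N) ∧
    (∀ (t : ℝ) (i : Fin N),
        v i t = -(Real.sqrt 2 / ((N : ℝ) * ε)) * Real.sin (Real.sqrt 2 * t / ε)) ∧
    (∀ (t : ℝ) (φ : ℝ → ℝ),
        (1 / (N : ℝ)) * ∑ i, v i t * φ (x i t)
          = -(Real.sqrt 2 * Real.sin (Real.sqrt 2 * t / ε) / ((N : ℝ) * ε))
              * ((1 / (N : ℝ)) * ∑ i, φ (x i t))) :=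
  oneD_coulomb_lattice_current_general N ε x v hx hv hx0 hv0
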